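/- Let Γ be a graph whose underlying unsigned graph Γ̄ is the complete graph on a 4-element vertex set (every pair of distinct vertices is joined by at least one signed edge, and every signed edge of Γ has both endpoints in this set), and suppose Γ has at least one loop (E₁(Γ) ≠ ∅). Then every 3-cocycle η : A(Γ) → 𝔽_3 is constant on all of A(Γ). -/
import Mathlib


open scoped Classical

noncomputable section

/-- A (candidate) hyperplane in `ℂ^l`: a submodule of `Fin l → ℂ`. -/
abbrev Hyp (l : ℕ) := Submodule ℂ (Fin l → ℂ)

/-- `X` is a rank-2 flat of the central arrangement `A`. -/
def IsRank2Flat {l : ℕ} (A : Finset (Hyp l)) (X : Hyp l) : Prop :=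
  ∃ H ∈ A, ∃ K ∈ A, H ≠ K ∧ X = H ⊓ K

/-- The hyperplanes of `A` containing the flat `X` (so `m_X = (flatHyps A X).card`). -/
def flatHyps {l : ℕ} (A : Finset (Hyp l)) (X : Hyp l) : Finset {H // H ∈ A} :=
  A.attach.filter fun L => X ≤ (L : Hyp l)

/-- `η : A → 𝔽_p` is a `p`-cocycle: for every rank-2 flat `X`, the sum of `η` over `A_X`
vanishes when `p ∣ m_X`, and `η` is constant on `A_X` when `p ∤ m_X`. -/
def IsCocycle {l : ℕ} (p : ℕ) (A : Finset (Hyp l)) (η : {H // H ∈ A} → ZMod p) : Prop :=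
  ∀ X : Hyp l, IsRank2Flat A X →
    ((p ∣ (flatHyps A X).card → ∑ L ∈ flatHyps A X, η L = 0) ∧
     (¬ p ∣ (flatHyps A X).card →
       ∀ H ∈ flatHyps A X, ∀ K ∈ flatHyps A X, η H = η K))

/-- The rank of a central arrangement in `ℂ^l`: the codimension of the intersection of
all its hyperplanes. -/
def arrRank {l : ℕ} (A : Finset (Hyp l)) : ℕ :=
  l - Module.finrank ℂ ↥(A.inf id)

/-- A graph `Γ` in `[l]`: loops `E₁(Γ) ⊆ [l]`, and signed edges `ij^ε` (recorded with
`i < j`, the sign `ε` encoded by a `Bool`: `true ↦ +1`, `false ↦ -1`); a pair `{i,j}`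
may carry one signed edge (a simple edge) or both (a double edge). -/
structure SGraph (l : ℕ) where
  loops : Finset (Fin l)
  edges : Finset (Fin l × Fin l × Bool)
  edges_lt : ∀ e ∈ edges, e.1 < e.2.1

/-- The hyperplane `x_i = 0` of a loop at `i`. -/
def loopHyp {l : ℕ} (i : Fin l) : Hyp l :=
  LinearMap.ker (LinearMap.proj i : (Fin l → ℂ) →ₗ[ℂ] ℂ)

/-- The hyperplane `x_i + ε·x_j = 0` of a signed edge `ij^ε`. -/
def edgeHyp {l : ℕ} (i j : Fin l) (b : Bool) : Hyp l :=
  LinearMap.ker ((LinearMap.proj i : (Fin l → ℂ) →ₗ[ℂ] ℂ)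
    + (if b then (1 : ℂ) else -1) • (LinearMap.proj j : (Fin l → ℂ) →ₗ[ℂ] ℂ))

/-- The graphic arrangement `A(Γ)` in `ℂ^l`. -/
def graphArr {l : ℕ} (G : SGraph l) : Finset (Hyp l) :=
  G.loops.image loopHyp ∪ G.edges.image fun e => edgeHyp e.1 e.2.1 e.2.2

/-- The (unordered) signed edge `ij^ε` belongs to `Γ`. -/
def SGraph.hasEdge {l : ℕ} (G : SGraph l) (i j : Fin l) (b : Bool) : Prop :=
  (i, j, b) ∈ G.edges ∨ (j, i, b) ∈ G.edges

def sgn (b : Bool) : ℂ := if b then 1 else -1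

lemma sgn_ne_zero (b : Bool) : sgn b ≠ 0 := by cases b <;> norm_num [sgn]

lemma mem_loopHyp {l : ℕ} {i : Fin l} {x : Fin l → ℂ} : x ∈ loopHyp i ↔ x i = 0 := by
  simp [loopHyp, LinearMap.mem_ker]

lemma mem_edgeHyp {l : ℕ} {i j : Fin l} {b : Bool} {x : Fin l → ℂ} :
    x ∈ edgeHyp i j b ↔ x i + sgn b * x j = 0 := by
  simp only [edgeHyp, LinearMap.mem_ker, LinearMap.add_apply, LinearMap.smul_apply,
    LinearMap.proj_apply, smul_eq_mul, sgn]

lemma mem_graphArr {l : ℕ} {G : SGraph l} {H : Hyp l} :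
    H ∈ graphArr G ↔ (∃ i ∈ G.loops, H = loopHyp i) ∨
      (∃ e ∈ G.edges, H = edgeHyp e.1 e.2.1 e.2.2) := by
  simp [graphArr, Finset.mem_union, Finset.mem_image, eq_comm]

lemma loop_mem_arr {l : ℕ} {G : SGraph l} {i : Fin l} (h : i ∈ G.loops) :
    loopHyp i ∈ graphArr G := mem_graphArr.mpr (Or.inl ⟨i, h, rfl⟩)

lemma edge_mem_arr {l : ℕ} {G : SGraph l} {u v : Fin l} {s : Bool}
    (h : (u, v, s) ∈ G.edges) : edgeHyp u v s ∈ graphArr G :=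
  mem_graphArr.mpr (Or.inr ⟨(u, v, s), h, rfl⟩)

lemma hyp_ne_of_witness {l : ℕ} {H K : Hyp l} (x : Fin l → ℂ)
    (hx : x ∈ H) (hx' : x ∉ K) : H ≠ K := fun h => hx' (h ▸ hx)

lemma not_inf_le_of_witness {l : ℕ} {H K L : Hyp l} (x : Fin l → ℂ)
    (h1 : x ∈ H) (h2 : x ∈ K) (h3 : x ∉ L) : ¬ (H ⊓ K ≤ L) :=
  fun h => h3 (h (Submodule.mem_inf.mpr ⟨h1, h2⟩))

lemma cocycle_pair {l : ℕ} {A : Finset (Hyp l)} {η : {H // H ∈ A} → ZMod 3}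
    (hη : IsCocycle 3 A η) {H K : Hyp l} (hH : H ∈ A) (hK : K ∈ A) (hne : H ≠ K)
    (honly : ∀ L ∈ A, H ⊓ K ≤ L → L = H ∨ L = K) :
    η ⟨H, hH⟩ = η ⟨K, hK⟩ := by
  have hflat : IsRank2Flat A (H ⊓ K) := ⟨H, hH, K, hK, hne, rfl⟩
  have hEq : flatHyps A (H ⊓ K) = {⟨H, hH⟩, ⟨K, hK⟩} := by
    ext L
    simp only [flatHyps, Finset.mem_filter, Finset.mem_attach, true_and,
      Finset.mem_insert, Finset.mem_singleton]
    constructor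
    · intro hle
      rcases honly L L.2 hle with h | h
      · exact Or.inl (Subtype.ext h)
      · exact Or.inr (Subtype.ext h)
    · rintro (rfl | rfl)
      · exact inf_le_left
      · exact inf_le_right
  have hcard : (flatHyps A (H ⊓ K)).card = 2 := by
    rw [hEq, Finset.card_insert_of_notMem, Finset.card_singleton]
    simp [Subtype.ext_iff, hne]
  exact (hη (H ⊓ K) hflat).2 (by rw [hcard]; decide)
    ⟨H, hH⟩ (by rw [hEq]; simp) ⟨K, hK⟩ (by rw [hEq]; simp)

-- witness vectors
def uvec {l : ℕ} (j : Fin l) : Fin l → ℂ := fun t => if t = j then 1 else 0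

def vA {l : ℕ} (a b : Fin l) (ε : Bool) : Fin l → ℂ :=
  fun t => if t = a then 1 else if t = b then -sgn ε else 0

def vB {l : ℕ} (a b : Fin l) (ε : Bool) : Fin l → ℂ :=
  fun t => if t = a then -sgn ε else if t = b then 1 else 0

lemma uvec_self {l : ℕ} (j : Fin l) : uvec j j = 1 := by simp [uvec]
lemma uvec_ne {l : ℕ} {j t : Fin l} (h : t ≠ j) : uvec j t = 0 := by simp [uvec, h]

lemma vA_a {l : ℕ} (a b : Fin l) (ε : Bool) : vA a b ε a = 1 := by simp [vA]
lemma vA_b {l : ℕ} {a b : Fin l} (ε : Bool) (h : a ≠ b) : vA a b ε b = -sgn ε := by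
  simp [vA, Ne.symm h]
lemma vA_ne {l : ℕ} {a b t : Fin l} (ε : Bool) (h1 : t ≠ a) (h2 : t ≠ b) :
    vA a b ε t = 0 := by simp [vA, h1, h2]

lemma vB_a {l : ℕ} (a b : Fin l) (ε : Bool) : vB a b ε a = -sgn ε := by simp [vB]
lemma vB_b {l : ℕ} {a b : Fin l} (ε : Bool) (h : a ≠ b) : vB a b ε b = 1 := by
  simp [vB, Ne.symm h]
lemma vB_ne {l : ℕ} {a b t : Fin l} (ε : Bool) (h1 : t ≠ a) (h2 : t ≠ b) :
    vB a b ε t = 0 := by simp [vB, h1, h2]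

lemma vA_mem_edge {l : ℕ} {a b : Fin l} (ε : Bool) (h : a ≠ b) :
    vA a b ε ∈ edgeHyp a b ε := by
  rw [mem_edgeHyp, vA_a, vA_b ε h]; cases ε <;> norm_num [sgn]

lemma vB_mem_edge {l : ℕ} {a b : Fin l} (ε : Bool) (h : a ≠ b) :
    vB a b ε ∈ edgeHyp a b ε := by
  rw [mem_edgeHyp, vB_a, vB_b ε h]; cases ε <;> norm_num [sgn]

lemma uvec_mem_edge {l : ℕ} {a b j : Fin l} (ε : Bool) (h1 : a ≠ j) (h2 : b ≠ j) :
    uvec j ∈ edgeHyp a b ε := by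
  rw [mem_edgeHyp, uvec_ne h1, uvec_ne h2]; ring

lemma uvec_mem_loop {l : ℕ} {i j : Fin l} (h : i ≠ j) : uvec j ∈ loopHyp i := by
  rw [mem_loopHyp, uvec_ne h]

lemma vA_mem_loop {l : ℕ} {a b i : Fin l} (ε : Bool) (h1 : i ≠ a) (h2 : i ≠ b) :
    vA a b ε ∈ loopHyp i := by rw [mem_loopHyp, vA_ne ε h1 h2]

lemma vB_mem_loop {l : ℕ} {a b i : Fin l} (ε : Bool) (h1 : i ≠ a) (h2 : i ≠ b) :
    vB a b ε ∈ loopHyp i := by rw [mem_loopHyp, vB_ne ε h1 h2]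

lemma honlyA {l : ℕ} (G : SGraph l) {i a b : Fin l} {ε : Bool}
    (hab : a < b) (hia : i ≠ a) (hib : i ≠ b) :
    ∀ L ∈ graphArr G, loopHyp i ⊓ edgeHyp a b ε ≤ L →
      L = loopHyp i ∨ L = edgeHyp a b ε := by
  intro L hL hle
  have hab' : a ≠ b := hab.ne
  rcases mem_graphArr.mp hL with ⟨j, hj, rfl⟩ | ⟨⟨u, v, s⟩, he, rfl⟩
  · by_cases hji : j = i
    · subst hji; exact Or.inl rfl
    exfalso
    by_cases hja : j = a
    · subst hja
      exact not_inf_le_of_witness (vA j b ε) (vA_mem_loop ε hia hib)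
        (vA_mem_edge ε hab') (by rw [mem_loopHyp, vA_a]; norm_num) hle
    by_cases hjb : j = b
    · subst hjb
      exact not_inf_le_of_witness (vB a j ε) (vB_mem_loop ε hia hib)
        (vB_mem_edge ε hab') (by rw [mem_loopHyp, vB_b ε hab']; norm_num) hle
    · exact not_inf_le_of_witness (uvec j) (uvec_mem_loop (Ne.symm hji))
        (uvec_mem_edge ε (Ne.symm hja) (Ne.symm hjb))
        (by rw [mem_loopHyp, uvec_self]; norm_num) hle
  · have huv : u < v := G.edges_lt _ he
    by_cases hua : u = a
    · subst hua
      by_cases hvb : v = b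
      · subst hvb
        by_cases hsε : s = ε
        · subst hsε; exact Or.inr rfl
        · exfalso
          refine not_inf_le_of_witness (vA u v ε) (vA_mem_loop ε hia hib)
            (vA_mem_edge ε hab') ?_ hle
          rw [mem_edgeHyp, vA_a, vA_b ε hab']
          cases s <;> cases ε <;> simp_all [sgn]
      · exfalso
        refine not_inf_le_of_witness (vA u b ε) (vA_mem_loop ε hia hib)
          (vA_mem_edge ε hab') ?_ hle
        rw [mem_edgeHyp, vA_a, vA_ne ε huv.ne' hvb]
        norm_num
    exfalso
    by_cases hui : u = i
    · subst hui
      by_cases hva : v = a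
      · subst hva
        refine not_inf_le_of_witness (vA v b ε) (vA_mem_loop ε hia hib)
          (vA_mem_edge ε hab') ?_ hle
        rw [mem_edgeHyp, vA_ne ε hia hib, vA_a]
        simpa using sgn_ne_zero s
      by_cases hvb : v = b
      · subst hvb
        refine not_inf_le_of_witness (vB a v ε) (vB_mem_loop ε hia hib)
          (vB_mem_edge ε hab') ?_ hle
        rw [mem_edgeHyp, vB_ne ε hia hib, vB_b ε hab']
        simpa using sgn_ne_zero s
      · refine not_inf_le_of_witness (uvec v) (uvec_mem_loop huv.ne)
          (uvec_mem_edge ε (Ne.symm hva) (Ne.symm hvb)) ?_ hle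
        rw [mem_edgeHyp, uvec_ne huv.ne, uvec_self]
        simpa using sgn_ne_zero s
    by_cases hub : u = b
    · subst hub
      have hva : v ≠ a := (hab.trans huv).ne'
      refine not_inf_le_of_witness (vB a u ε) (vB_mem_loop ε hia hib)
        (vB_mem_edge ε hab') ?_ hle
      rw [mem_edgeHyp, vB_b ε hab', vB_ne ε hva huv.ne']
      norm_num
    · refine not_inf_le_of_witness (uvec u) (uvec_mem_loop (Ne.symm hui))
        (uvec_mem_edge ε (Ne.symm hua) (Ne.symm hub)) ?_ hle
      rw [mem_edgeHyp, uvec_self, uvec_ne huv.ne']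
      norm_num

lemma vA_mem_edge' {l : ℕ} {a b c d : Fin l} (ε δ : Bool)
    (h1 : c ≠ a) (h2 : c ≠ b) (h3 : d ≠ a) (h4 : d ≠ b) :
    vA a b ε ∈ edgeHyp c d δ := by
  rw [mem_edgeHyp, vA_ne ε h1 h2, vA_ne ε h3 h4]; ring

lemma vB_mem_edge' {l : ℕ} {a b c d : Fin l} (ε δ : Bool)
    (h1 : c ≠ a) (h2 : c ≠ b) (h3 : d ≠ a) (h4 : d ≠ b) :
    vB a b ε ∈ edgeHyp c d δ := by
  rw [mem_edgeHyp, vB_ne ε h1 h2, vB_ne ε h3 h4]; ring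

lemma honlyB {l : ℕ} (G : SGraph l) {a b c d : Fin l} {ε δ : Bool}
    (hab : a < b) (hcd : c < d) (hac : a ≠ c) (had : a ≠ d)
    (hbc : b ≠ c) (hbd : b ≠ d) :
    ∀ L ∈ graphArr G, edgeHyp a b ε ⊓ edgeHyp c d δ ≤ L →
      L = edgeHyp a b ε ∨ L = edgeHyp c d δ := by
  intro L hL hle
  have hab' : a ≠ b := hab.ne
  have hcd' : c ≠ d := hcd.ne
  rcases mem_graphArr.mp hL with ⟨j, hj, rfl⟩ | ⟨⟨u, v, s⟩, he, rfl⟩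
  · exfalso
    by_cases hja : j = a
    · subst hja
      exact not_inf_le_of_witness (vA j b ε) (vA_mem_edge ε hab')
        (vA_mem_edge' ε δ (Ne.symm hac) (Ne.symm hbc) (Ne.symm had) (Ne.symm hbd))
        (by rw [mem_loopHyp, vA_a]; norm_num) hle
    by_cases hjb : j = b
    · subst hjb
      exact not_inf_le_of_witness (vB a j ε) (vB_mem_edge ε hab')
        (vB_mem_edge' ε δ (Ne.symm hac) (Ne.symm hbc) (Ne.symm had) (Ne.symm hbd))
        (by rw [mem_loopHyp, vB_b ε hab']; norm_num) hle
    by_cases hjc : j = c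
    · subst hjc
      exact not_inf_le_of_witness (vA j d δ)
        (vA_mem_edge' δ ε hac had hbc hbd) (vA_mem_edge δ hcd')
        (by rw [mem_loopHyp, vA_a]; norm_num) hle
    by_cases hjd : j = d
    · subst hjd
      exact not_inf_le_of_witness (vB c j δ)
        (vB_mem_edge' δ ε hac had hbc hbd) (vB_mem_edge δ hcd')
        (by rw [mem_loopHyp, vB_b δ hcd']; norm_num) hle
    · exact not_inf_le_of_witness (uvec j)
        (uvec_mem_edge ε (Ne.symm hja) (Ne.symm hjb))
        (uvec_mem_edge δ (Ne.symm hjc) (Ne.symm hjd))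
        (by rw [mem_loopHyp, uvec_self]; norm_num) hle
  · have huv : u < v := G.edges_lt _ he
    by_cases hua : u = a
    · subst hua
      by_cases hvb : v = b
      · subst hvb
        by_cases hsε : s = ε
        · subst hsε; exact Or.inl rfl
        · exfalso
          refine not_inf_le_of_witness (vA u v ε) (vA_mem_edge ε hab')
            (vA_mem_edge' ε δ (Ne.symm hac) (Ne.symm hbc) (Ne.symm had) (Ne.symm hbd))
            ?_ hle
          rw [mem_edgeHyp, vA_a, vA_b ε hab']
          cases s <;> cases ε <;> simp_all [sgn]
      · exfalso
        refine not_inf_le_of_witness (vA u b ε) (vA_mem_edge ε hab')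
          (vA_mem_edge' ε δ (Ne.symm hac) (Ne.symm hbc) (Ne.symm had) (Ne.symm hbd))
          ?_ hle
        rw [mem_edgeHyp, vA_a, vA_ne ε huv.ne' hvb]
        norm_num
    by_cases huc : u = c
    · subst huc
      by_cases hvd : v = d
      · subst hvd
        by_cases hsδ : s = δ
        · subst hsδ; exact Or.inr rfl
        · exfalso
          refine not_inf_le_of_witness (vA u v δ)
            (vA_mem_edge' δ ε hac had hbc hbd) (vA_mem_edge δ hcd') ?_ hle
          rw [mem_edgeHyp, vA_a, vA_b δ hcd']
          cases s <;> cases δ <;> simp_all [sgn]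
      · exfalso
        refine not_inf_le_of_witness (vA u d δ)
          (vA_mem_edge' δ ε hac had hbc hbd) (vA_mem_edge δ hcd') ?_ hle
        rw [mem_edgeHyp, vA_a, vA_ne δ huv.ne' hvd]
        norm_num
    exfalso
    by_cases hub : u = b
    · subst hub
      refine not_inf_le_of_witness (vB a u ε) (vB_mem_edge ε hab')
        (vB_mem_edge' ε δ (Ne.symm hac) (Ne.symm hbc) (Ne.symm had) (Ne.symm hbd))
        ?_ hle
      rw [mem_edgeHyp, vB_b ε hab', vB_ne ε (hab.trans huv).ne' huv.ne']
      norm_num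
    by_cases hud : u = d
    · subst hud
      refine not_inf_le_of_witness (vB c u δ)
        (vB_mem_edge' δ ε hac had hbc hbd) (vB_mem_edge δ hcd') ?_ hle
      rw [mem_edgeHyp, vB_b δ hcd', vB_ne δ (hcd.trans huv).ne' huv.ne']
      norm_num
    · refine not_inf_le_of_witness (uvec u)
        (uvec_mem_edge ε (Ne.symm hua) (Ne.symm hub))
        (uvec_mem_edge δ (Ne.symm huc) (Ne.symm hud)) ?_ hle
      rw [mem_edgeHyp, uvec_self, uvec_ne huv.ne']
      norm_num

lemma etaLE {l : ℕ} {G : SGraph l} {η : {H // H ∈ graphArr G} → ZMod 3}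
    (hη : IsCocycle 3 (graphArr G) η) {i a b : Fin l} {ε : Bool}
    (hi : i ∈ G.loops) (he : (a, b, ε) ∈ G.edges) (hia : i ≠ a) (hib : i ≠ b) :
    η ⟨loopHyp i, loop_mem_arr hi⟩ = η ⟨edgeHyp a b ε, edge_mem_arr he⟩ := by
  have hab : a < b := G.edges_lt _ he
  refine cocycle_pair hη _ _ ?_ (honlyA G hab hia hib)
  exact hyp_ne_of_witness (uvec a) (uvec_mem_loop hia)
    (by rw [mem_edgeHyp, uvec_self, uvec_ne hab.ne']; norm_num)

lemma etaEE {l : ℕ} {G : SGraph l} {η : {H // H ∈ graphArr G} → ZMod 3}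
    (hη : IsCocycle 3 (graphArr G) η) {a b c d : Fin l} {ε δ : Bool}
    (he : (a, b, ε) ∈ G.edges) (hf : (c, d, δ) ∈ G.edges)
    (hac : a ≠ c) (had : a ≠ d) (hbc : b ≠ c) (hbd : b ≠ d) :
    η ⟨edgeHyp a b ε, edge_mem_arr he⟩ = η ⟨edgeHyp c d δ, edge_mem_arr hf⟩ := by
  have hab : a < b := G.edges_lt _ he
  have hcd : c < d := G.edges_lt _ hf
  refine cocycle_pair hη _ _ ?_ (honlyB G hab hcd hac had hbc hbd)
  exact hyp_ne_of_witness (uvec c) (uvec_mem_edge ε hac hbc)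
    (by rw [mem_edgeHyp, uvec_self, uvec_ne hcd.ne']; norm_num)

/-- Let `Γ` be a graph whose underlying unsigned graph is the complete graph on a
4-element vertex set `V` (and every signed edge of `Γ` has both endpoints in `V`).
If `Γ` has at least one loop, then every 3-cocycle `η : A(Γ) → 𝔽₃` is constant on all
of `A(Γ)`. -/
theorem loop_lemma {l : ℕ} (G : SGraph l) (V : Finset (Fin l))
    (hV : V.card = 4)
    (hcomplete : ∀ x ∈ V, ∀ y ∈ V, x ≠ y → ∃ ε, G.hasEdge x y ε)
    (hedges : ∀ e ∈ G.edges, e.1 ∈ V ∧ e.2.1 ∈ V)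
    (hloop : G.loops ≠ ∅)
    (η : {H // H ∈ graphArr G} → ZMod 3) (hη : IsCocycle 3 (graphArr G) η) :
    ∀ H K : {H // H ∈ graphArr G}, η H = η K := by
  obtain ⟨i₀, hi₀⟩ := Finset.nonempty_iff_ne_empty.mpr hloop
  -- every edge hyperplane has the same η-value as the loop at i₀
  have claim_edge : ∀ a b ε (he : (a, b, ε) ∈ G.edges),
      η ⟨edgeHyp a b ε, edge_mem_arr he⟩ = η ⟨loopHyp i₀, loop_mem_arr hi₀⟩ := by
    intro a b ε he
    have hab : a < b := G.edges_lt _ he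
    have haV : a ∈ V := (hedges _ he).1
    have hbV : b ∈ V := (hedges _ he).2
    by_cases h : i₀ ≠ a ∧ i₀ ≠ b
    · exact (etaLE hη hi₀ he h.1 h.2).symm
    · -- i₀ is an endpoint of the edge; route through the opposite edge of K₄
      have hi₀ab : i₀ = a ∨ i₀ = b := by tauto
      have hsub : {a, b} ⊆ V := by
        intro x hx; simp only [Finset.mem_insert, Finset.mem_singleton] at hx
        rcases hx with rfl | rfl <;> assumption
      have hcard : 1 < (V \ {a, b}).card := by
        rw [Finset.card_sdiff_of_subset hsub, hV, Finset.card_insert_of_notMem (by simp [hab.ne]),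
          Finset.card_singleton]
        norm_num
      obtain ⟨u, hu, v, hv, huv⟩ := Finset.one_lt_card.mp hcard
      rw [Finset.mem_sdiff, Finset.mem_insert, Finset.mem_singleton] at hu hv
      push_neg at hu hv
      obtain ⟨huV, hua, hub⟩ := hu
      obtain ⟨hvV, hva, hvb⟩ := hv
      obtain ⟨ε', hE⟩ := hcomplete u huV v hvV huv
      have hiu : i₀ ≠ u := by rcases hi₀ab with rfl | rfl <;> [exact Ne.symm hua; exact Ne.symm hub]
      have hiv : i₀ ≠ v := by rcases hi₀ab with rfl | rfl <;> [exact Ne.symm hva; exact Ne.symm hvb]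
      rcases hE with hf | hf
      · calc η ⟨edgeHyp a b ε, edge_mem_arr he⟩
            = η ⟨edgeHyp u v ε', edge_mem_arr hf⟩ :=
              etaEE hη he hf (Ne.symm hua) (Ne.symm hva) (Ne.symm hub) (Ne.symm hvb)
          _ = η ⟨loopHyp i₀, loop_mem_arr hi₀⟩ := (etaLE hη hi₀ hf hiu hiv).symm
      · calc η ⟨edgeHyp a b ε, edge_mem_arr he⟩
            = η ⟨edgeHyp v u ε', edge_mem_arr hf⟩ :=
              etaEE hη he hf (Ne.symm hva) (Ne.symm hua) (Ne.symm hvb) (Ne.symm hub)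
          _ = η ⟨loopHyp i₀, loop_mem_arr hi₀⟩ := (etaLE hη hi₀ hf hiv hiu).symm
  -- every loop hyperplane has the same η-value as the loop at i₀
  have claim_loop : ∀ j (hj : j ∈ G.loops),
      η ⟨loopHyp j, loop_mem_arr hj⟩ = η ⟨loopHyp i₀, loop_mem_arr hi₀⟩ := by
    intro j hj
    have hcard : 1 < (V.erase j).card := by
      have h1 : V.card - 1 ≤ (V.erase j).card := Finset.pred_card_le_card_erase
      omega
    obtain ⟨u, hu, v, hv, huv⟩ := Finset.one_lt_card.mp hcard
    obtain ⟨hju, huV⟩ := Finset.mem_erase.mp hu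
    obtain ⟨hjv, hvV⟩ := Finset.mem_erase.mp hv
    obtain ⟨ε', hE⟩ := hcomplete u huV v hvV huv
    rcases hE with hf | hf
    · calc η ⟨loopHyp j, loop_mem_arr hj⟩
          = η ⟨edgeHyp u v ε', edge_mem_arr hf⟩ := etaLE hη hj hf (Ne.symm hju) (Ne.symm hjv)
        _ = η ⟨loopHyp i₀, loop_mem_arr hi₀⟩ := claim_edge u v ε' hf
    · calc η ⟨loopHyp j, loop_mem_arr hj⟩
          = η ⟨edgeHyp v u ε', edge_mem_arr hf⟩ := etaLE hη hj hf (Ne.symm hjv) (Ne.symm hju)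
        _ = η ⟨loopHyp i₀, loop_mem_arr hi₀⟩ := claim_edge v u ε' hf
  have main : ∀ H : {H // H ∈ graphArr G}, η H = η ⟨loopHyp i₀, loop_mem_arr hi₀⟩ := by
    intro H
    rcases mem_graphArr.mp H.2 with ⟨j, hj, hHj⟩ | ⟨⟨a, b, ε⟩, he, hHe⟩
    · have : H = ⟨loopHyp j, loop_mem_arr hj⟩ := Subtype.ext hHj
      rw [this]; exact claim_loop j hj
    · have : H = ⟨edgeHyp a b ε, edge_mem_arr he⟩ := Subtype.ext hHe
      rw [this]; exact claim_edge a b ε he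
  intro H K
  rw [main H, main K]
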